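/- The lattice N(D_4^6) — generated by the vectors (x_1,…,x_24) ∈ ℤ²⁴ with ∑_{i=1+4j}^{4+4j} x_i ≡ 0 mod 2 for j = 0,…,5, together with the six explicit glue vectors built from s = (1/2)(1,1,1,1), v = (0,0,0,1), c = s − v — is an even unimodular lattice of rank 24 with respect to the standard inner product on ℝ²⁴. -/

import Mathlib

/-!
Write `D` for the integer vectors whose six blocks have even sum. The generators of `N(D₄⁶)`
pair integrally and have even norm: within `D` this is parity, and every glue vector is half an
integer vector whose blocks are constant mod 2, so it pairs integrally with `D`. Hence `N(D₄⁶)`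
is even and contained in its dual.

Conversely, take 24 vectors `b k` of `N(D₄⁶)` (three roots of `D₄` in each block and the six
glue vectors) and 24 vectors `b' l` of `N(D₄⁶)` with `b k ⬝ b' l = δ k l`. Every `y` in the
dual then equals `∑ k, (y ⬝ b k) • b' k`, an integral combination of the `b' k`; so the dual
is `N(D₄⁶)` and `b'` is a `ℤ`-basis of it, giving rank 24.
-/

/-- `s = (1/2)(1,1,1,1)`. -/
noncomputable def sD4 : Fin 4 → ℝ := ![1/2, 1/2, 1/2, 1/2]

/-- `v = (0,0,0,1)`. -/
noncomputable def vD4 : Fin 4 → ℝ := ![0, 0, 0, 1]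

/-- `c = s - v`. -/
noncomputable def cD4 : Fin 4 → ℝ := sD4 - vD4

/-- The Niemeier lattice `N(D₄⁶)` in `ℝ²⁴ = (ℝ⁴)⁶`: the ℤ-span of the integer vectors
whose six blocks of four coordinates each have even sum, together with the six glue
vectors `(v,c,c,v,c,v)`, `(c,v,v,c,c,v)`, `(c,v,c,v,v,c)`, `(s,0,c,v,0,s)`,
`(0,0,c,c,c,c)`, `(v,0,c,s,v,0)`. -/
def ND4 : Submodule ℤ (Fin 6 × Fin 4 → ℝ) :=
  Submodule.span ℤ
    ({x : Fin 6 × Fin 4 → ℝ | (∀ p, ∃ m : ℤ, x p = (m : ℝ)) ∧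
        ∀ j : Fin 6, ∃ m : ℤ, ∑ i : Fin 4, x (j, i) = 2 * (m : ℝ)} ∪
      {fun p => ![vD4, cD4, cD4, vD4, cD4, vD4] p.1 p.2,
       fun p => ![cD4, vD4, vD4, cD4, cD4, vD4] p.1 p.2,
       fun p => ![cD4, vD4, cD4, vD4, vD4, cD4] p.1 p.2,
       fun p => ![sD4, 0, cD4, vD4, 0, sD4] p.1 p.2,
       fun p => ![0, 0, cD4, cD4, cD4, cD4] p.1 p.2,
       fun p => ![vD4, 0, cD4, sD4, vD4, 0] p.1 p.2})

open Matrix Submodule Set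

section DualLattice

variable {ι : Type*}

noncomputable def halve : (ι → ℤ) →+ (ι → ℝ) where
  toFun z p := z p / 2
  map_zero' := by ext; simp
  map_add' z z' := by ext; simp [add_div]

@[simp]
theorem halve_apply (z : ι → ℤ) (p : ι) : halve z p = z p / 2 :=
  rfl

variable [Fintype ι]

theorem halve_dotProduct_halve (z z' : ι → ℤ) :
    halve z ⬝ᵥ halve z' = ((z ⬝ᵥ z' : ℤ) : ℝ) / 4 := by
  simp only [dotProduct, halve_apply, Int.cast_sum, Int.cast_mul, Finset.sum_div]
  exact Finset.sum_congr rfl fun p _ => by ring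

def dualLattice (S : Set (ι → ℝ)) : Submodule ℤ (ι → ℝ) where
  carrier := {y | ∀ x ∈ S, ∃ m : ℤ, y ⬝ᵥ x = m}
  add_mem' := by
    rintro y y' hy hy' x hx
    obtain ⟨m, hm⟩ := hy x hx
    obtain ⟨m', hm'⟩ := hy' x hx
    exact ⟨m + m', by rw [add_dotProduct, hm, hm', Int.cast_add]⟩
  zero_mem' := fun _ _ => ⟨0, by simp⟩
  smul_mem' := by
    rintro c y hy x hx
    obtain ⟨m, hm⟩ := hy x hx
    exact ⟨c * m, by rw [smul_dotProduct, hm, zsmul_eq_mul, Int.cast_mul]⟩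

theorem mem_dualLattice {S : Set (ι → ℝ)} {y : ι → ℝ} :
    y ∈ dualLattice S ↔ ∀ x ∈ S, ∃ m : ℤ, y ⬝ᵥ x = m :=
  Iff.rfl

theorem dualLattice_anti {S T : Set (ι → ℝ)} (h : S ⊆ T) : dualLattice T ≤ dualLattice S :=
  fun _ hy x hx => hy x (h hx)

theorem dualLattice_span (S : Set (ι → ℝ)) : dualLattice (span ℤ S) = dualLattice S := by
  refine le_antisymm (dualLattice_anti subset_span) fun y hy x hx => ?_
  have hspan : span ℤ S ≤ dualLattice {y} := span_le.2 fun x hx => by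
    simpa [mem_dualLattice, dotProduct_comm] using hy x hx
  simpa [dotProduct_comm] using hspan hx y rfl

theorem span_le_dualLattice_span {S : Set (ι → ℝ)} (hS : S ⊆ dualLattice S) :
    span ℤ S ≤ dualLattice (span ℤ S) := by
  rw [dualLattice_span]
  exact span_le.2 hS

theorem exists_dotProduct_self_eq_two_mul_of_mem_span {S : Set (ι → ℝ)}
    (hS : S ⊆ dualLattice S) (heven : ∀ x ∈ S, ∃ m : ℤ, x ⬝ᵥ x = 2 * m)
    {x : ι → ℝ} (hx : x ∈ span ℤ S) : ∃ m : ℤ, x ⬝ᵥ x = 2 * m := by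
  induction hx using span_induction with
  | mem x hx => exact heven x hx
  | zero => exact ⟨0, by simp⟩
  | add x y hx hy ihx ihy =>
    obtain ⟨mx, hmx⟩ := ihx
    obtain ⟨my, hmy⟩ := ihy
    obtain ⟨mxy, hmxy⟩ := span_le_dualLattice_span hS hx y hy
    refine ⟨mx + my + mxy, ?_⟩
    rw [add_dotProduct, dotProduct_add, dotProduct_add, dotProduct_comm y x, hmx, hmy, hmxy]
    push_cast
    ring
  | smul c x _ ih =>
    obtain ⟨m, hm⟩ := ih
    refine ⟨c * c * m, ?_⟩
    rw [smul_dotProduct, dotProduct_smul, smul_smul, hm, zsmul_eq_mul]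
    push_cast
    ring

variable {κ : Type*} [Fintype κ] [DecidableEq κ] {b b' : κ → ι → ℝ}

theorem linearIndependent_of_dotProduct_eq_ite
    (hb : ∀ k l, b k ⬝ᵥ b' l = if k = l then 1 else 0) : LinearIndependent ℝ b' := by
  rw [Fintype.linearIndependent_iff]
  intro c hc k
  simpa [dotProduct_sum, dotProduct_smul, hb] using congrArg (b k ⬝ᵥ ·) hc

theorem eq_sum_dotProduct_smul (hb : ∀ k l, b k ⬝ᵥ b' l = if k = l then 1 else 0)
    (hcard : Fintype.card κ = Fintype.card ι) (y : ι → ℝ) :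
    y = ∑ k, (y ⬝ᵥ b k) • b' k := by
  have hspan := (linearIndependent_of_dotProduct_eq_ite hb).span_eq_top_of_card_eq_finrank'
    (hcard.trans (Module.finrank_fintype_fun_eq_card ℝ).symm)
  have hy : y ∈ span ℝ (range b') := hspan ▸ mem_top
  obtain ⟨t, rfl⟩ := (mem_span_range_iff_exists_fun ℝ).1 hy
  congr! 2 with k
  rw [dotProduct_comm, dotProduct_sum]
  simp [dotProduct_smul, hb]

theorem dualLattice_range_le_span (hb : ∀ k l, b k ⬝ᵥ b' l = if k = l then 1 else 0)
    (hcard : Fintype.card κ = Fintype.card ι) :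
    dualLattice (range b) ≤ span ℤ (range b') := by
  intro y hy
  choose m hm using fun k => hy (b k) (mem_range_self k)
  rw [eq_sum_dotProduct_smul hb hcard y]
  refine sum_mem fun k _ => ?_
  rw [hm k, Int.cast_smul_eq_zsmul]
  exact zsmul_mem (subset_span (mem_range_self k)) _

end DualLattice

section Checkerboard

variable {J I : Type*} [Fintype I]

variable (J I) in
def checkerboard : Set (J × I → ℝ) :=
  {x | (∀ p, ∃ m : ℤ, x p = m) ∧ ∀ j, ∃ m : ℤ, ∑ i, x (j, i) = 2 * m}

variable (J I) in
def twiceCheckerboard : Set (J × I → ℤ) :=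
  {z | (∀ p, 2 ∣ z p) ∧ ∀ j, 4 ∣ ∑ i, z (j, i)}

instance [Fintype J] : DecidablePred (· ∈ twiceCheckerboard J I) := fun z =>
  inferInstanceAs (Decidable ((∀ p, 2 ∣ z p) ∧ ∀ j, 4 ∣ ∑ i, z (j, i)))

theorem exists_eq_intCast_of_mem_checkerboard {x : J × I → ℝ} (hx : x ∈ checkerboard J I) :
    ∃ n : J × I → ℤ, x = Int.cast ∘ n ∧ ∀ j, Even (∑ i, n (j, i)) := by
  choose n hn using hx.1
  refine ⟨n, funext hn, fun j => ?_⟩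
  obtain ⟨m, hm⟩ := hx.2 j
  refine ⟨m, ?_⟩
  simp only [hn] at hm
  exact_mod_cast hm.trans (two_mul _)

theorem halve_mem_checkerboard {z : J × I → ℤ} (hz : z ∈ twiceCheckerboard J I) :
    halve z ∈ checkerboard J I := by
  refine ⟨fun p => ?_, fun j => ?_⟩
  · obtain ⟨m, hm⟩ := hz.1 p
    exact ⟨m, by simp [hm]⟩
  · obtain ⟨m, hm⟩ := hz.2 j
    refine ⟨m, ?_⟩
    simp only [halve_apply, ← Finset.sum_div]
    rw [← Int.cast_sum, hm]
    push_cast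
    ring

variable [Fintype J]

theorem even_dotProduct_of_even_blocks {n z : J × I → ℤ} (hn : ∀ j, Even (∑ i, n (j, i)))
    (hz : ∀ j, ∃ c : ZMod 2, ∀ i, (z (j, i) : ZMod 2) = c) : Even (n ⬝ᵥ z) := by
  choose c hc using hz
  rw [← ZMod.intCast_eq_zero_iff_even, dotProduct, Fintype.sum_prod_type]
  push_cast
  simp_rw [hc, ← Finset.sum_mul]
  refine Finset.sum_eq_zero fun j _ => ?_
  rw [(by push_cast; rfl : ∑ i, (n (j, i) : ZMod 2) = ((∑ i, n (j, i) : ℤ) : ZMod 2)),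
    (ZMod.intCast_eq_zero_iff_even).2 (hn j), zero_mul]

theorem even_dotProduct_self_of_even_blocks {n : J × I → ℤ}
    (hn : ∀ j, Even (∑ i, n (j, i))) : Even (n ⬝ᵥ n) := by
  have hsq : ∀ a : ZMod 2, a * a = a := by decide
  rw [← ZMod.intCast_eq_zero_iff_even, dotProduct, Fintype.sum_prod_type]
  push_cast
  simp_rw [hsq]
  refine Finset.sum_eq_zero fun j _ => ?_
  rw [(by push_cast; rfl : ∑ i, (n (j, i) : ZMod 2) = ((∑ i, n (j, i) : ℤ) : ZMod 2)),
    (ZMod.intCast_eq_zero_iff_even).2 (hn j)]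

theorem checkerboard_subset_dualLattice : checkerboard J I ⊆ dualLattice (checkerboard J I) := by
  intro x hx y hy
  obtain ⟨n, rfl, -⟩ := exists_eq_intCast_of_mem_checkerboard hx
  obtain ⟨n', rfl, -⟩ := exists_eq_intCast_of_mem_checkerboard hy
  exact ⟨n ⬝ᵥ n', by simp [dotProduct]⟩

theorem exists_dotProduct_self_eq_two_mul_of_mem_checkerboard {x : J × I → ℝ}
    (hx : x ∈ checkerboard J I) : ∃ m : ℤ, x ⬝ᵥ x = 2 * m := by
  obtain ⟨n, rfl, hn⟩ := exists_eq_intCast_of_mem_checkerboard hx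
  obtain ⟨m, hm⟩ := even_dotProduct_self_of_even_blocks hn
  exact ⟨m, by simpa [dotProduct, two_mul] using congrArg (Int.cast : ℤ → ℝ) hm⟩

theorem exists_dotProduct_halve_eq_of_mem_checkerboard {x : J × I → ℝ}
    (hx : x ∈ checkerboard J I) {z : J × I → ℤ}
    (hz : ∀ j, ∃ c : ZMod 2, ∀ i, (z (j, i) : ZMod 2) = c) :
    ∃ m : ℤ, x ⬝ᵥ halve z = m := by
  obtain ⟨n, rfl, hn⟩ := exists_eq_intCast_of_mem_checkerboard hx
  obtain ⟨m, hm⟩ := even_dotProduct_of_even_blocks hn hz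
  refine ⟨m, ?_⟩
  have : ((n ⬝ᵥ z : ℤ) : ℝ) = 2 * m := by rw [hm]; push_cast; ring
  simp only [dotProduct, Int.cast_sum, Int.cast_mul] at this
  simp only [dotProduct, Function.comp_apply, halve_apply, mul_div_assoc', ← Finset.sum_div, this]
  ring

end Checkerboard

-- Half-integral vectors are stored doubled, as integer vectors, so that the finite checks
-- below are run by the kernel.
def twiceS : Fin 4 → ℤ := ![1, 1, 1, 1]

def twiceV : Fin 4 → ℤ := ![0, 0, 0, 2]

def twiceC : Fin 4 → ℤ := ![1, 1, 1, -1]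

def twiceGlue (k : Fin 6) (p : Fin 6 × Fin 4) : ℤ :=
  ![![twiceV, twiceC, twiceC, twiceV, twiceC, twiceV],
    ![twiceC, twiceV, twiceV, twiceC, twiceC, twiceV],
    ![twiceC, twiceV, twiceC, twiceV, twiceV, twiceC],
    ![twiceS, 0, twiceC, twiceV, 0, twiceS],
    ![0, 0, twiceC, twiceC, twiceC, twiceC],
    ![twiceV, 0, twiceC, twiceS, twiceV, 0]] k p.1 p.2

noncomputable def glue (k : Fin 6) : Fin 6 × Fin 4 → ℝ :=
  halve (twiceGlue k)

def generatorsND4 : Set (Fin 6 × Fin 4 → ℝ) :=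
  checkerboard (Fin 6) (Fin 4) ∪ range glue

theorem sD4_eq_halve : sD4 = halve twiceS := by
  funext i; fin_cases i <;> norm_num [sD4, twiceS]

theorem vD4_eq_halve : vD4 = halve twiceV := by
  funext i; fin_cases i <;> norm_num [vD4, twiceV]

theorem cD4_eq_halve : cD4 = halve twiceC := by
  funext i; fin_cases i <;> norm_num [cD4, sD4, vD4, twiceC]

theorem glue_eq (k : Fin 6) :
    glue k = fun p => ![![vD4, cD4, cD4, vD4, cD4, vD4], ![cD4, vD4, vD4, cD4, cD4, vD4],
      ![cD4, vD4, cD4, vD4, vD4, cD4], ![sD4, 0, cD4, vD4, 0, sD4], ![0, 0, cD4, cD4, cD4, cD4],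
      ![vD4, 0, cD4, sD4, vD4, 0]] k p.1 p.2 := by
  rw [sD4_eq_halve, vD4_eq_halve, cD4_eq_halve]
  funext ⟨j, i⟩
  fin_cases k <;> fin_cases j <;> simp [glue, twiceGlue]

theorem ND4_eq_span_generatorsND4 : ND4 = span ℤ generatorsND4 := by
  have hrange : range glue = {glue 0, glue 1, glue 2, glue 3, glue 4, glue 5} := by
    ext x; simp [Fin.exists_fin_succ, eq_comm]
  rw [generatorsND4, hrange]
  simp only [glue_eq]
  rfl

theorem twiceGlue_block_mod_two (k j : Fin 6) :
    ∃ c : ZMod 2, ∀ i, (twiceGlue k (j, i) : ZMod 2) = c := by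
  revert k j; decide +kernel

theorem four_dvd_twiceGlue_dotProduct (k l : Fin 6) : 4 ∣ twiceGlue k ⬝ᵥ twiceGlue l := by
  revert k l; decide +kernel

theorem eight_dvd_twiceGlue_dotProduct_self (k : Fin 6) : 8 ∣ twiceGlue k ⬝ᵥ twiceGlue k := by
  revert k; decide +kernel

theorem generatorsND4_subset_dualLattice : generatorsND4 ⊆ dualLattice generatorsND4 := by
  have glue_checkerboard (k : Fin 6) (x) (hx : x ∈ checkerboard (Fin 6) (Fin 4)) :
      ∃ m : ℤ, glue k ⬝ᵥ x = m := by
    rw [dotProduct_comm]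
    exact exists_dotProduct_halve_eq_of_mem_checkerboard hx (twiceGlue_block_mod_two k)
  rintro x (hx | ⟨k, rfl⟩) y (hy | ⟨l, rfl⟩)
  · exact checkerboard_subset_dualLattice hx y hy
  · rw [dotProduct_comm]
    exact glue_checkerboard l x hx
  · exact glue_checkerboard k y hy
  · obtain ⟨m, hm⟩ := four_dvd_twiceGlue_dotProduct k l
    exact ⟨m, by simp only [glue, halve_dotProduct_halve, hm]; push_cast; ring⟩

theorem exists_dotProduct_self_eq_two_mul_of_mem_generatorsND4 :
    ∀ x ∈ generatorsND4, ∃ m : ℤ, x ⬝ᵥ x = 2 * m := by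
  rintro x (hx | ⟨k, rfl⟩)
  · exact exists_dotProduct_self_eq_two_mul_of_mem_checkerboard hx
  · obtain ⟨m, hm⟩ := eight_dvd_twiceGlue_dotProduct_self k
    exact ⟨m, by simp only [glue, halve_dotProduct_halve, hm]; push_cast; ring⟩

theorem halve_mem_ND4 {z : Fin 6 × Fin 4 → ℤ} (a : Fin 6 → ℤ)
    (hz : z - ∑ k, a k • twiceGlue k ∈ twiceCheckerboard (Fin 6) (Fin 4)) :
    halve z ∈ ND4 := by
  have hsplit : halve z = halve (z - ∑ k, a k • twiceGlue k) + ∑ k, a k • glue k := by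
    simp only [glue, map_sub, map_sum, map_zsmul, sub_add_cancel]
  rw [ND4_eq_span_generatorsND4, hsplit]
  refine add_mem (subset_span (mem_union_left _ (halve_mem_checkerboard hz))) ?_
  exact sum_mem fun k _ => zsmul_mem (subset_span (mem_union_right _ (mem_range_self k))) _

-- Three roots of `D₄` per block, chosen so that together with the glue vectors they have Gram
-- determinant 1 and a sparse dual basis `dualBasisND4`, obtained by inverting the Gram matrix.
-- `dualGlueCoeff l` says by which glue vectors `dualBasisND4 l` differs from a vector of
-- `checkerboard`.
def blockRoot : Fin 6 → Fin 3 → Fin 4 → ℤ :=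
  ![![![1, -1, 0, 0], ![1, 0, 0, -1], ![1, 0, 0, 1]],
    ![![1, -1, 0, 0], ![1, 0, 0, -1], ![1, 0, 0, 1]],
    ![![1, -1, 0, 0], ![1, 0, 0, -1], ![1, 0, 0, 1]],
    ![![1, 0, 0, -1], ![0, 1, 1, 0], ![0, 0, 1, -1]],
    ![![1, 1, 0, 0], ![1, 0, 0, -1], ![0, 0, 1, -1]],
    ![![1, 0, 0, -1], ![1, 0, 0, 1], ![0, 0, 1, 1]]]

def twiceBasis : Fin 6 × Fin 3 ⊕ Fin 6 → Fin 6 × Fin 4 → ℤ :=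
  Sum.elim (fun k p => if p.1 = k.1 then 2 * blockRoot k.1 k.2 p.2 else 0) twiceGlue

def twiceDualRoot : Fin 6 → Fin 3 → Fin 6 → Fin 4 → ℤ := ![
  ![![![0, -2, 2, 0], 0, 0, 0, 0, 0],
    ![![1, 1, -3, -1], ![0, 0, -2, 0], ![0, 0, 2, 0],
      ![1, -1, 1, 1], ![-1, 1, -1, -1], ![0, -2, 0, 0]],
    ![![1, 1, -1, 1], ![0, 0, 2, 0], ![0, 0, -2, 0],
      ![-1, 1, -1, -1], ![1, -1, 1, 1], ![0, 2, 0, 0]]],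
  ![![0, ![0, -2, 2, 0], 0, 0, 0, 0],
    ![![0, 0, 2, 0], ![1, 1, -1, -1], 0, ![-1, 1, -1, -1], ![1, -1, 1, 1], 0],
    ![![0, 0, -2, 0], ![1, 1, -3, 1], 0, ![1, -1, 1, 1], ![-1, 1, -1, -1], 0]],
  ![![0, 0, ![0, -2, 2, 0], 0, 0, 0],
    ![![0, 0, 2, 0], 0, ![1, 1, -1, -1], ![-1, 1, -1, -1], 0, ![0, -2, 0, 0]],
    ![![0, 0, -2, 0], 0, ![1, 1, -3, 1], ![1, -1, 1, 1], 0, ![0, 2, 0, 0]]],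
  ![![![0, 0, -2, 0], ![0, 0, 2, 0], ![0, 0, -6, 0], ![4, -2, 2, 2], 0, ![0, 4, 0, 0]],
    ![![0, 0, -2, 0], ![0, 0, 2, 0], ![0, 0, -6, 0], ![2, 0, 2, 2], 0, ![0, 4, 0, 0]],
    ![0, 0, 0, ![0, -2, 2, 0], 0, 0]],
  ![![![0, 0, -2, 0], ![0, 0, -2, 0], ![0, 0, -4, 0], ![2, -2, 2, 2], ![0, 2, 0, 0], ![0, 2, 0, 0]],
    ![0, 0, 0, 0, ![2, -2, 0, 0], 0],
    ![![0, 0, -2, 0], ![0, 0, -2, 0], ![0, 0, -4, 0],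
      ![2, -2, 2, 2], ![0, 0, 2, 0], ![0, 2, 0, 0]]],
  ![![![0, 0, 2, 0], 0, ![0, 0, 2, 0], 0, ![-1, 1, -1, -1], ![1, -5, 1, -1]],
    ![![0, 0, -2, 0], 0, ![0, 0, -2, 0], 0, ![1, -1, 1, 1], ![1, 3, -1, 1]],
    ![0, 0, 0, 0, 0, ![0, -2, 2, 0]]]]

def twiceDualGlue : Fin 6 → Fin 6 → Fin 4 → ℤ := ![
  ![0, ![0, 0, 4, 0], 0, 0, 0, 0],
  ![![0, 0, 4, 0], 0, ![0, 0, 4, 0], ![-2, 2, -2, -2], 0, ![0, -4, 0, 0]],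
  ![0, ![0, 0, 4, 0], ![0, 0, -4, 0], 0, ![2, -2, 2, 2], ![0, 4, 0, 0]],
  ![0, ![0, 0, -4, 0], 0, ![2, -2, 2, 2], ![-2, 2, -2, -2], 0],
  ![0, 0, ![0, 0, 4, 0], ![-2, 2, -2, -2], 0, 0],
  ![0, ![0, 0, -4, 0], ![0, 0, 4, 0], 0, 0, ![0, -4, 0, 0]]]

def dualRootGlueCoeff : Fin 6 → Fin 3 → Fin 6 → ℤ := ![
  ![![0, 0, 0, 0, 0, 0], ![0, 1, 0, 0, 0, 0], ![0, 1, 0, 0, 0, 0]],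
  ![![0, 0, 0, 0, 0, 0], ![1, 0, 1, 1, 0, 1], ![1, 0, 1, 1, 0, 1]],
  ![![0, 0, 0, 0, 0, 0], ![0, 1, 1, 0, 1, 1], ![0, 1, 1, 0, 1, 1]],
  ![![0, 1, 0, 1, 1, 0], ![0, 1, 0, 1, 1, 0], ![0, 0, 0, 0, 0, 0]],
  ![![0, 0, 1, 1, 0, 0], ![0, 0, 0, 0, 0, 0], ![0, 0, 1, 1, 0, 0]],
  ![![0, 1, 1, 0, 0, 1], ![0, 1, 1, 0, 0, 1], ![0, 0, 0, 0, 0, 0]]]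

def twiceDual : Fin 6 × Fin 3 ⊕ Fin 6 → Fin 6 × Fin 4 → ℤ :=
  Sum.elim (fun k p => twiceDualRoot k.1 k.2 p.1 p.2) (fun k p => twiceDualGlue k p.1 p.2)

def dualGlueCoeff : Fin 6 × Fin 3 ⊕ Fin 6 → Fin 6 → ℤ :=
  Sum.elim (fun k => dualRootGlueCoeff k.1 k.2) 0

theorem twiceBasis_dotProduct_twiceDual (k l : Fin 6 × Fin 3 ⊕ Fin 6) :
    twiceBasis k ⬝ᵥ twiceDual l = if k = l then 4 else 0 := by
  revert k l; decide +kernel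

theorem twiceBasis_inl_mem_twiceCheckerboard (k : Fin 6 × Fin 3) :
    twiceBasis (.inl k) ∈ twiceCheckerboard (Fin 6) (Fin 4) := by
  revert k; decide +kernel

theorem twiceDual_sub_mem_twiceCheckerboard (l : Fin 6 × Fin 3 ⊕ Fin 6) :
    twiceDual l - ∑ k, dualGlueCoeff l k • twiceGlue k ∈
      twiceCheckerboard (Fin 6) (Fin 4) := by
  revert l; decide +kernel

noncomputable def basisND4 (k : Fin 6 × Fin 3 ⊕ Fin 6) : Fin 6 × Fin 4 → ℝ :=
  halve (twiceBasis k)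

noncomputable def dualBasisND4 (l : Fin 6 × Fin 3 ⊕ Fin 6) : Fin 6 × Fin 4 → ℝ :=
  halve (twiceDual l)

theorem basisND4_dotProduct_dualBasisND4 (k l : Fin 6 × Fin 3 ⊕ Fin 6) :
    basisND4 k ⬝ᵥ dualBasisND4 l = if k = l then 1 else 0 := by
  rw [basisND4, dualBasisND4, halve_dotProduct_halve, twiceBasis_dotProduct_twiceDual]
  split_ifs <;> norm_num

theorem basisND4_mem (k : Fin 6 × Fin 3 ⊕ Fin 6) : basisND4 k ∈ ND4 := by
  rw [ND4_eq_span_generatorsND4]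
  refine subset_span ?_
  rcases k with k | k
  · exact mem_union_left _ (halve_mem_checkerboard (twiceBasis_inl_mem_twiceCheckerboard k))
  · exact mem_union_right _ (mem_range_self k)

theorem dualBasisND4_mem (l : Fin 6 × Fin 3 ⊕ Fin 6) : dualBasisND4 l ∈ ND4 :=
  halve_mem_ND4 (dualGlueCoeff l) (twiceDual_sub_mem_twiceCheckerboard l)

theorem ND4_le_dualLattice : ND4 ≤ dualLattice ND4 := by
  rw [ND4_eq_span_generatorsND4]
  exact span_le_dualLattice_span generatorsND4_subset_dualLattice

theorem dualLattice_ND4_le_span_dualBasisND4 : dualLattice ND4 ≤ span ℤ (range dualBasisND4) :=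
  (dualLattice_anti (range_subset_iff.2 basisND4_mem)).trans
    (dualLattice_range_le_span basisND4_dotProduct_dualBasisND4 rfl)

theorem span_dualBasisND4_le : span ℤ (range dualBasisND4) ≤ ND4 :=
  span_le.2 (range_subset_iff.2 dualBasisND4_mem)

theorem dualLattice_ND4 : dualLattice ND4 = ND4 :=
  le_antisymm (dualLattice_ND4_le_span_dualBasisND4.trans span_dualBasisND4_le) ND4_le_dualLattice

theorem ND4_eq_span_dualBasisND4 : ND4 = span ℤ (range dualBasisND4) :=
  le_antisymm (ND4_le_dualLattice.trans dualLattice_ND4_le_span_dualBasisND4) span_dualBasisND4_le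

/-- `N(D₄⁶)` is an even unimodular lattice of rank 24 with respect to the standard
inner product on `ℝ²⁴`. -/
theorem stmt13 :
    -- even
    (∀ x ∈ ND4, ∃ m : ℤ, ∑ p : Fin 6 × Fin 4, x p * x p = 2 * (m : ℝ)) ∧
    -- unimodular: the lattice equals its dual
    (∀ y : Fin 6 × Fin 4 → ℝ,
      (∀ x ∈ ND4, ∃ m : ℤ, ∑ p : Fin 6 × Fin 4, y p * x p = (m : ℝ)) ↔ y ∈ ND4) ∧
    -- rank 24
    Module.finrank ℤ ND4 = 24 := by
  refine ⟨fun x hx => ?_, fun y => ?_, ?_⟩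
  · rw [ND4_eq_span_generatorsND4] at hx
    exact exists_dotProduct_self_eq_two_mul_of_mem_span generatorsND4_subset_dualLattice
      exists_dotProduct_self_eq_two_mul_of_mem_generatorsND4 hx
  · change y ∈ dualLattice ND4 ↔ y ∈ ND4
    rw [dualLattice_ND4]
  · have hli := (linearIndependent_of_dotProduct_eq_ite
      basisND4_dotProduct_dualBasisND4).restrict_scalars' ℤ
    rw [ND4_eq_span_dualBasisND4, finrank_span_eq_card hli]
    rfl
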